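/- Suppose for each x, the random variables P^{(M)}(x) satisfy the Bernstein-type tail bound ℙ(|P^{(M)}(x) - P^{(n)}(x)| ≥ ε) ≤ 2·exp(-ε² / (2εα_{n+1}/3 + (1/2)Σ_{i=n+1}^M α_i²)) for all M > n and ε > 0, where α_k = (2-1/k)/(k+1), and that P^{(M)}(x) converges almost surely to P^{(∞)}(x) as M → ∞. Then for every δ ∈ (0,1) there exist K > 0 and N such that for all n > N, ℙ(|P^{(∞)}(x) - P^{(n)}(x)| ≤ K·n^{-1/2}) ≥ 1 - δ; i.e., P^{(∞)}(x) - P^{(n)}(x) = O_p(n^{-1/2}). -/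

import Mathlib

/-!
Since `α k ≤ 2 / k`, the variance term `∑_{i > n} α i ^ 2` is at most `8 / n`, so with
`ε = K n^{-1/2}` the Bernstein denominator is `O((K + 1) / n)` while `ε² = K² / n`; the choice
`K = 2 log (2 / δ) + 3` makes the tail bound at most `δ`, uniformly in `M`. This bound survives
the limit `M → ∞` because, almost surely, `|P∞ - Pn| > ε` forces `|PM - Pn| ≥ ε` for all
large `M`, and the events "for all `M ≥ j`" increase with `j`.
-/

open MeasureTheory Filter Topology

lemma rbp_weight_pos {x : ℝ} (hx : 1 / 2 < x) : 0 < (2 - 1 / x) * (1 / (x + 1)) := by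
  have : 1 / x < 2 := by rw [div_lt_iff₀ (by linarith)]; linarith
  have : 0 < x + 1 := by linarith
  have : 0 < 2 - 1 / x := by linarith
  positivity

lemma rbp_weight_le {x : ℝ} (hx : 0 < x) : (2 - 1 / x) * (1 / (x + 1)) ≤ 2 / x := by
  calc (2 - 1 / x) * (1 / (x + 1)) ≤ 2 * (1 / x) := by
        gcongr
        · linarith [one_div_pos.2 hx]
        · linarith
    _ = 2 / x := by ring

open Finset in
lemma sum_Icc_sq_le_of_abs_le {a : ℕ → ℝ} {c : ℝ} {n : ℕ} (h : ∀ i, n < i → |a i| ≤ c / i)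
    (M : ℕ) : ∑ i ∈ Icc (n + 1) M, a i ^ 2 ≤ 2 * c ^ 2 / (n + 1) := by
  calc ∑ i ∈ Icc (n + 1) M, a i ^ 2 ≤ ∑ i ∈ Ioo n (M + 1), c ^ 2 * ((i : ℝ) ^ 2)⁻¹ := by
        refine sum_le_sum fun i hi => ?_
        have hi : n < i := by simp at hi; omega
        calc a i ^ 2 = |a i| ^ 2 := (sq_abs _).symm
          _ ≤ (c / i) ^ 2 := pow_le_pow_left₀ (abs_nonneg _) (h i hi) 2
          _ = c ^ 2 * ((i : ℝ) ^ 2)⁻¹ := by rw [div_pow, div_eq_mul_inv]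
    _ = c ^ 2 * ∑ i ∈ Ioo n (M + 1), ((i : ℝ) ^ 2)⁻¹ := (mul_sum _ _ _).symm
    _ ≤ c ^ 2 * (2 / (n + 1)) := by gcongr; exact sum_Ioo_inv_sq_le n (M + 1)
    _ = 2 * c ^ 2 / (n + 1) := by ring

lemma rpow_neg_one_half_sq {x : ℝ} (hx : 0 ≤ x) : (x ^ (-(1 : ℝ) / 2)) ^ 2 = x⁻¹ := by
  rw [← Real.rpow_natCast, ← Real.rpow_mul hx]
  norm_num [Real.rpow_neg_one]

lemma le_bernstein_exponent {x t a S : ℝ} (hx : 1 ≤ x) (ht : 0 ≤ t) (ha : 0 < a) (ha' : a ≤ 2 / x)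
    (hS : 0 ≤ S) (hS' : S ≤ 8 / x) :
    t ≤ ((2 * t + 3) * x ^ (-(1 : ℝ) / 2)) ^ 2 /
      (2 * ((2 * t + 3) * x ^ (-(1 : ℝ) / 2)) * a / 3 + 1 / 2 * S) := by
  set K := 2 * t + 3
  set ε := K * x ^ (-(1 : ℝ) / 2)
  have hx0 : 0 < x := by linarith
  have hε : 0 < ε := by positivity
  have hεK : ε ≤ K :=
    mul_le_of_le_one_right (by positivity) (Real.rpow_le_one_of_one_le_of_nonpos hx (by norm_num))
  have hε2 : ε ^ 2 = K ^ 2 / x := by rw [mul_pow, rpow_neg_one_half_sq hx0.le, div_eq_mul_inv]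
  have hD : 2 * ε * a / 3 + 1 / 2 * S ≤ (4 / 3 * K + 4) / x := by
    have h1 : ε * a ≤ K * (2 / x) := mul_le_mul hεK ha' ha.le (by positivity)
    have h2 : (4 / 3 * K + 4) / x = 2 * (K * (2 / x)) / 3 + 1 / 2 * (8 / x) := by ring
    rw [h2]; linarith
  rw [le_div_iff₀ (by positivity), hε2]
  calc t * (2 * ε * a / 3 + 1 / 2 * S) ≤ t * ((4 / 3 * K + 4) / x) := by gcongr
    _ ≤ K ^ 2 / x := by
      rw [← mul_div_assoc]
      gcongr
      nlinarith

open Real in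
lemma two_mul_exp_bernstein_le {α : ℕ → ℝ}
    (hα : ∀ k : ℕ, 1 ≤ k → α k = (2 - 1 / (k : ℝ)) * (1 / ((k : ℝ) + 1)))
    {n : ℕ} (hn : 0 < n) (M : ℕ) {δ : ℝ} (hδ : 0 < δ) (hδ2 : δ ≤ 2) :
    let ε := (2 * log (2 / δ) + 3) * (n : ℝ) ^ (-(1 : ℝ) / 2)
    2 * exp (-(ε ^ 2) / (2 * ε * α (n + 1) / 3 + (1 / 2) * ∑ i ∈ Finset.Icc (n + 1) M, (α i) ^ 2))
      ≤ δ := by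
  intro ε
  have ht : 0 ≤ log (2 / δ) := log_nonneg (by rw [le_div_iff₀ hδ]; linarith)
  have hn1 : (1 : ℝ) ≤ n := by exact_mod_cast hn
  have hα_le : ∀ i, n < i → |α i| ≤ 2 / i := fun i hi => by
    have hi1 : (1 : ℝ) ≤ i := by exact_mod_cast hn.trans hi
    rw [hα i (by omega), abs_of_pos (rbp_weight_pos (by linarith))]
    exact rbp_weight_le (by linarith)
  have hαn : 0 < α (n + 1) := by
    rw [hα _ (by omega)]; push_cast; exact rbp_weight_pos (by linarith)
  have hαn' : α (n + 1) ≤ 2 / n := by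
    refine (le_abs_self _).trans ((hα_le _ n.lt_succ_self).trans ?_)
    push_cast; gcongr; linarith
  have hS : ∑ i ∈ Finset.Icc (n + 1) M, (α i) ^ 2 ≤ 8 / n := by
    refine (sum_Icc_sq_le_of_abs_le hα_le M).trans ?_
    norm_num; gcongr; linarith
  calc 2 * exp (-(ε ^ 2) / _) ≤ 2 * exp (-log (2 / δ)) := by
        gcongr
        rw [neg_div, neg_le_neg_iff]
        exact le_bernstein_exponent hn1 ht hαn hαn' (by positivity) hS
    _ = δ := by rw [exp_neg, exp_log (by positivity), inv_div]; field_simp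

lemma ofReal_one_sub_le_measure {Ω : Type*} [MeasurableSpace Ω] {μ : Measure Ω}
    [IsProbabilityMeasure μ] {s : Set Ω} {δ : ℝ} (hδ : 0 ≤ δ) (h : μ sᶜ ≤ ENNReal.ofReal δ) :
    ENNReal.ofReal (1 - δ) ≤ μ s :=
  calc ENNReal.ofReal (1 - δ) = 1 - ENNReal.ofReal δ := by
        rw [ENNReal.ofReal_sub _ hδ, ENNReal.ofReal_one]
    _ ≤ 1 - μ sᶜ := tsub_le_tsub_left h _
    _ ≤ μ s := tsub_le_iff_right.2 (by simpa using measure_univ_le_add_compl (μ := μ) s)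

lemma measure_lt_dist_of_tendsto_le {Ω E : Type*} [MeasurableSpace Ω] [PseudoMetricSpace E]
    {μ : Measure Ω} {X : ℕ → Ω → E} {Y Z : Ω → E} {ε : ℝ} {b : ENNReal}
    (hconv : ∀ᵐ ω ∂μ, Tendsto (X · ω) atTop (𝓝 (Y ω)))
    (hb : ∀ᶠ M in atTop, μ {ω | ε ≤ dist (X M ω) (Z ω)} ≤ b) :
    μ {ω | ε < dist (Y ω) (Z ω)} ≤ b := by
  set A : ℕ → Set Ω := fun j => {ω | ∀ M, j ≤ M → ε ≤ dist (X M ω) (Z ω)}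
  have hA : Monotone A := fun j k hjk ω hω M hM => hω M (hjk.trans hM)
  have hsub : {ω | ε < dist (Y ω) (Z ω)} ≤ᵐ[μ] ⋃ j, A j := by
    filter_upwards [hconv] with ω hω hlt
    obtain ⟨j, hj⟩ := eventually_atTop.1 ((hω.dist tendsto_const_nhds).eventually_const_lt hlt)
    exact Set.mem_iUnion.2 ⟨j, fun M hM => (hj M hM).le⟩
  obtain ⟨m, hm⟩ := eventually_atTop.1 hb
  calc μ {ω | ε < dist (Y ω) (Z ω)} ≤ μ (⋃ j, A j) := measure_mono_ae hsub
    _ = ⨆ j, μ (A j) := hA.measure_iUnion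
    _ ≤ b := iSup_le fun j =>
      (measure_mono fun ω (hω : ω ∈ A j) => hω (max j m) (le_max_left _ _)).trans
        (hm _ (le_max_right _ _))

/-- Given the Bernstein-type tail bound for the R-BP martingale and a.s. convergence
`P^(M)(x) → P^(∞)(x)`, the error `P^(∞)(x) - P^(n)(x)` is `O_p(n^{-1/2})`. -/
theorem stmt3 {Ω : Type*} [MeasurableSpace Ω] (μ : Measure Ω) [IsProbabilityMeasure μ]
    (P : ℕ → Ω → ℝ) (Pinf : Ω → ℝ)
    (α : ℕ → ℝ) (hα : ∀ k : ℕ, 1 ≤ k → α k = (2 - 1/(k:ℝ)) * (1/((k:ℝ)+1)))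
    (htail : ∀ n M : ℕ, n < M → ∀ ε : ℝ, 0 < ε →
      μ {ω | ε ≤ |P M ω - P n ω|} ≤
        ENNReal.ofReal (2 * Real.exp (-(ε^2) /
          (2 * ε * α (n+1) / 3 + (1/2) * ∑ i ∈ Finset.Icc (n+1) M, (α i)^2))))
    (hconv : ∀ᵐ ω ∂μ, Tendsto (fun M => P M ω) atTop (nhds (Pinf ω))) :
    ∀ δ : ℝ, 0 < δ → δ < 1 → ∃ K : ℝ, 0 < K ∧ ∃ N : ℕ, ∀ n : ℕ, N < n →
      ENNReal.ofReal (1 - δ) ≤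
        μ {ω | |Pinf ω - P n ω| ≤ K * (n:ℝ) ^ (-(1:ℝ)/2)} := by
  intro δ hδ hδ1
  have ht : 0 ≤ Real.log (2 / δ) := Real.log_nonneg (by rw [le_div_iff₀ hδ]; linarith)
  refine ⟨2 * Real.log (2 / δ) + 3, by positivity, 0, fun n hn => ?_⟩
  apply ofReal_one_sub_le_measure hδ.le
  have hε : 0 < (2 * Real.log (2 / δ) + 3) * (n : ℝ) ^ (-(1 : ℝ) / 2) := by positivity
  have hlim := measure_lt_dist_of_tendsto_le (Z := P n) hconv <|
    (eventually_gt_atTop n).mono fun M hM => by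
      simpa only [Real.dist_eq] using (htail n M hM _ hε).trans
        (ENNReal.ofReal_le_ofReal (two_mul_exp_bernstein_le hα hn M hδ (by linarith)))
  simpa only [Set.compl_ofPred, not_le, Real.dist_eq] using hlim
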